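/- arXiv:math/0112190 — 6 statements merged into one kernel-verified Lean document; each statement's English description precedes it below -/
import Mathlib

section
/- The palindromic automorphism group ΠA(F_n) equals the centralizer of σ_n in Aut(F_n). -/
/-- A reduced word in a free group is a palindrome if it equals its reverse. -/
def IsPalindrome {n : ℕ} (w : FreeGroup (Fin n)) : Prop :=
  (FreeGroup.toWord w).reverse = FreeGroup.toWord w

open FreeGroup in
private lemma red_eq_of_length_le {α : Type*} {L₁ L₂ : List (α × Bool)}
    (h : Red L₁ L₂) (hl : L₁.length ≤ L₂.length) : L₁ = L₂ := by
  rcases Relation.ReflTransGen.cases_head h with rfl | ⟨c, hstep, hred⟩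
  · rfl
  · have h1 := hstep.length
    have h2 := FreeGroup.Red.length_le hred
    omega

open FreeGroup in
private lemma sigma_mk {n : ℕ} (σ : MulAut (FreeGroup (Fin n)))
    (hσ : ∀ i : Fin n, σ (FreeGroup.of i) = (FreeGroup.of i)⁻¹) :
    ∀ L : List (Fin n × Bool), σ (mk L) = (mk L.reverse)⁻¹ := by
  intro L
  induction L with
  | nil => simp [← one_eq_mk]
  | cons a L ih =>
    obtain ⟨x, b⟩ := a
    have hone : ∀ b : Bool, σ (mk [(x, b)]) = (mk [(x, b)])⁻¹ := by
      intro b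
      cases b
      · have h1 : (mk [(x, false)] : FreeGroup (Fin n)) = (of x)⁻¹ := by
          rw [show (of x : FreeGroup (Fin n)) = mk [(x, true)] from rfl, inv_mk]
          simp [invRev]
        rw [h1, _root_.map_inv, hσ, inv_inv]
      · exact hσ x
    have hc : (mk ((x, b) :: L) : FreeGroup (Fin n)) = mk [(x, b)] * mk L := by
      rw [mul_mk]; rfl
    rw [hc, _root_.map_mul, hone, ih, ← mul_inv_rev, mul_mk]
    simp

open FreeGroup in
private lemma palindrome_iff {n : ℕ} (σ : MulAut (FreeGroup (Fin n)))
    (hσ : ∀ i : Fin n, σ (FreeGroup.of i) = (FreeGroup.of i)⁻¹)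
    (w : FreeGroup (Fin n)) : IsPalindrome w ↔ σ w = w⁻¹ := by
  have key : σ w = (mk w.toWord.reverse)⁻¹ := by
    conv_lhs => rw [← mk_toWord (x := w)]
    exact sigma_mk σ hσ _
  constructor
  · intro h
    rw [key, IsPalindrome] at *
    rw [h, mk_toWord]
  · intro h
    rw [key] at h
    have h2 : mk w.toWord.reverse = mk w.toWord := by
      rw [mk_toWord]; exact inv_injective h
    have h3 : reduce w.toWord.reverse = w.toWord := by
      rw [reduce.sound h2, reduce_toWord]
    have h4 : w.toWord.reverse = reduce w.toWord.reverse := by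
      refine red_eq_of_length_le reduce.red ?_
      rw [h3, List.length_reverse]
    rw [IsPalindrome, h4, h3]

/-- The palindromic automorphism group `ΠA(F_n)` equals the centralizer of
`σ_n` in `Aut(F_n)`. -/
theorem palindromicAut_eq_centralizer_sigma (n : ℕ)
    (σ : MulAut (FreeGroup (Fin n)))
    (hσ : ∀ i : Fin n, σ (FreeGroup.of i) = (FreeGroup.of i)⁻¹) :
    {α : MulAut (FreeGroup (Fin n)) | ∀ i : Fin n, IsPalindrome (α (FreeGroup.of i))} =
      (Subgroup.centralizer {σ} : Set (MulAut (FreeGroup (Fin n)))) := by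
  ext α
  simp only [Set.mem_setOf_eq, SetLike.mem_coe, Subgroup.mem_centralizer_iff,
    Set.mem_singleton_iff, forall_eq]
  constructor
  · intro h
    have hext : (σ * α : MulAut (FreeGroup (Fin n))).toMonoidHom
        = (α * σ : MulAut (FreeGroup (Fin n))).toMonoidHom := by
      apply FreeGroup.ext_hom
      intro i
      have h1 : (σ * α) (FreeGroup.of i) = σ (α (FreeGroup.of i)) := rfl
      have h2 : (α * σ) (FreeGroup.of i) = α (σ (FreeGroup.of i)) := rfl
      simp only [MulEquiv.coe_toMonoidHom, h1, h2, hσ, map_inv]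
      rw [(palindrome_iff σ hσ _).mp (h i)]
    ext x
    exact DFunLike.congr_fun hext x
  · intro h i
    rw [palindrome_iff σ hσ]
    have := DFunLike.congr_fun (congrArg MulEquiv.toMonoidHom h) (FreeGroup.of i)
    simp only [MulEquiv.coe_toMonoidHom] at this
    have h1 : (σ * α) (FreeGroup.of i) = σ (α (FreeGroup.of i)) := rfl
    have h2 : (α * σ) (FreeGroup.of i) = α (σ (FreeGroup.of i)) := rfl
    rw [h1, h2, hσ, map_inv] at this
    exact this
end

section
/- For pairwise distinct indices i, j, k, the elementary palindromic automorphisms satisfy the relation (a_i||a_k)(a_j||a_k)(a_i||a_j) = (a_i||a_j)(a_j||a_k)(a_i||a_k)^{-1}. -/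
/-- For pairwise distinct `i, j, k` the elementary palindromic automorphisms
satisfy `(a_i||a_k)(a_j||a_k)(a_i||a_j) = (a_i||a_j)(a_j||a_k)(a_i||a_k)⁻¹`.
Here products of automorphisms are composed left-to-right as in the paper: the product
`(a_i||a_k)(a_j||a_k)(a_i||a_j)` applies `(a_i||a_k)` first; in terms of the
(right-to-left) composition product of `MulAut` this is `Pij * Pjk * Pik`. -/
theorem elementary_palindromic_relation_three (n : ℕ) (i j k : Fin n)
    (hij : i ≠ j) (hik : i ≠ k) (hjk : j ≠ k)
    (Pik Pjk Pij : MulAut (FreeGroup (Fin n)))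
    (hPik : Pik (FreeGroup.of i) = FreeGroup.of k * FreeGroup.of i * FreeGroup.of k)
    (hPik' : ∀ m : Fin n, m ≠ i → Pik (FreeGroup.of m) = FreeGroup.of m)
    (hPjk : Pjk (FreeGroup.of j) = FreeGroup.of k * FreeGroup.of j * FreeGroup.of k)
    (hPjk' : ∀ m : Fin n, m ≠ j → Pjk (FreeGroup.of m) = FreeGroup.of m)
    (hPij : Pij (FreeGroup.of i) = FreeGroup.of j * FreeGroup.of i * FreeGroup.of j)
    (hPij' : ∀ m : Fin n, m ≠ i → Pij (FreeGroup.of m) = FreeGroup.of m) :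
    Pij * Pjk * Pik = Pik⁻¹ * Pjk * Pij := by
  have key : Pik * (Pij * Pjk * Pik) = Pjk * Pij := by
    apply MulEquiv.toMonoidHom_injective
    apply FreeGroup.ext_hom
    intro m
    simp only [MulEquiv.coe_toMonoidHom, MulAut.mul_apply]
    by_cases hmi : m = i
    · rw [hmi]
      simp only [map_mul, hPik, hPjk, hPij, hPik' j (Ne.symm hij), hPik' k (Ne.symm hik),
        hPjk' i hij, hPjk' k (Ne.symm hjk), hPij' j (Ne.symm hij), hPij' k (Ne.symm hik)]
      group
    · by_cases hmj : m = j
      · rw [hmj]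
        simp only [map_mul, hPik, hPjk, hPij, hPik' j (Ne.symm hij), hPik' k (Ne.symm hik),
          hPjk' i hij, hPjk' k (Ne.symm hjk), hPij' j (Ne.symm hij), hPij' k (Ne.symm hik)]
      · simp only [hPik' m hmi, hPjk' m hmj, hPij' m hmi]
  calc Pij * Pjk * Pik = Pik⁻¹ * (Pik * (Pij * Pjk * Pik)) := by group
    _ = Pik⁻¹ * (Pjk * Pij) := by rw [key]
    _ = Pik⁻¹ * Pjk * Pij := by group
end

section
/- The subgroup of Aut(F_n) generated by the n−1 elementary palindromic automorphisms (a_i||a_n), for i = 1, ..., n−1, is a free abelian group of rank n−1. -/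
/-!
Write `c ↦ φ_c` for the map sending `c : ℤ^(n-1)` to the endomorphism of `F_n` fixing `a_n` and
sending `a_i ↦ a_n^(c i) a_i a_n^(c i)`. Since `φ_c` fixes `a_n`, the exponents simply add under
composition: `φ_(c+d) = φ_c ∘ φ_d`, so `c ↦ φ_c` is a homomorphism `ℤ^(n-1) → Aut(F_n)` which sends
the `i`-th basis vector to `(a_i||a_n)`. Its image is therefore the subgroup in question, and it is
injective because the exponent sum of `a_n` in `φ_c(a_i)` is `2 c_i`.
-/

open FreeGroup (of lift ext_hom)

lemma FreeGroup.mulEquiv_ext {α M : Type*} [Monoid M] {f g : FreeGroup α ≃* M}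
    (h : ∀ a, f (of a) = g (of a)) : f = g :=
  MulEquiv.toMonoidHom_injective (ext_hom _ _ h)

namespace Palindromic

variable {m : ℕ}

def toEnd (c : Fin m → ℤ) : FreeGroup (Fin (m + 1)) →* FreeGroup (Fin (m + 1)) :=
  lift <| Fin.lastCases (of (Fin.last m))
    fun j => of (Fin.last m) ^ c j * of j.castSucc * of (Fin.last m) ^ c j

@[simp]
lemma toEnd_of_last (c : Fin m → ℤ) : toEnd c (of (Fin.last m)) = of (Fin.last m) := by
  simp [toEnd]

@[simp]
lemma toEnd_of_castSucc (c : Fin m → ℤ) (j : Fin m) :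
    toEnd c (of j.castSucc) = of (Fin.last m) ^ c j * of j.castSucc * of (Fin.last m) ^ c j := by
  simp [toEnd]

lemma toEnd_add (c d : Fin m → ℤ) : toEnd (c + d) = (toEnd c).comp (toEnd d) := by
  refine ext_hom _ _ fun k => ?_
  induction k using Fin.lastCases with
  | last => simp
  | cast j =>
    simp only [toEnd_of_castSucc, MonoidHom.comp_apply, map_mul, map_zpow, toEnd_of_last,
      Pi.add_apply, zpow_add]
    group

lemma toEnd_zero : toEnd (0 : Fin m → ℤ) = MonoidHom.id _ := by
  refine ext_hom _ _ fun k => ?_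
  induction k using Fin.lastCases with
  | last => simp
  | cast j => simp

def toAut : Multiplicative (Fin m → ℤ) →* MulAut (FreeGroup (Fin (m + 1))) where
  toFun c := (toEnd c.toAdd).toMulEquiv (toEnd (-c.toAdd))
    (by rw [← toEnd_add, neg_add_cancel, toEnd_zero])
    (by rw [← toEnd_add, add_neg_cancel, toEnd_zero])
  map_one' := FreeGroup.mulEquiv_ext fun k => by simp [toEnd_zero]
  map_mul' c d := FreeGroup.mulEquiv_ext fun k => by simp [toEnd_add]

@[simp]
lemma toAut_apply (c : Multiplicative (Fin m → ℤ)) (x : FreeGroup (Fin (m + 1))) :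
    toAut c x = toEnd c.toAdd x := rfl

def lastExponent : FreeGroup (Fin (m + 1)) →* Multiplicative ℤ :=
  lift <| Fin.lastCases (Multiplicative.ofAdd 1) fun _ => 1

lemma toAdd_lastExponent_toEnd_of_castSucc (c : Fin m → ℤ) (j : Fin m) :
    (lastExponent (toEnd c (of j.castSucc))).toAdd = 2 * c j := by
  simp [lastExponent]
  ring

lemma toEnd_injective : Function.Injective (toEnd (m := m)) := by
  intro c d h
  funext j
  have := congrArg (fun f => (lastExponent (f (of j.castSucc))).toAdd) h
  simp only [toAdd_lastExponent_toEnd_of_castSucc] at this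
  omega

lemma toAut_injective : Function.Injective (toAut (m := m)) := fun _ _ h =>
  toEnd_injective (congrArg MulEquiv.toMonoidHom h)

lemma eq_toAut_single_one (i : Fin m) {P : MulAut (FreeGroup (Fin (m + 1)))}
    (hP : P (of i.castSucc) = of (Fin.last m) * of i.castSucc * of (Fin.last m))
    (hP' : ∀ k, k ≠ i.castSucc → P (of k) = of k) :
    P = toAut (.ofAdd (Pi.single i 1)) := by
  refine FreeGroup.mulEquiv_ext fun k => ?_
  induction k using Fin.lastCases with
  | last => simp [hP' _ (Fin.castSucc_lt_last i).ne']
  | cast j =>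
    rcases eq_or_ne j i with rfl | hji
    · simp [hP]
    · simp [hji, hP' _ (Fin.castSucc_injective _ |>.ne hji)]

lemma range_toAut_eq_closure : (toAut (m := m)).range =
    Subgroup.closure (Set.range fun i => toAut (.ofAdd (Pi.single i 1))) := by
  refine le_antisymm ?_ (Subgroup.closure_le _ |>.2 (Set.range_subset_iff.2 fun i => ⟨_, rfl⟩))
  rintro _ ⟨c, rfl⟩
  obtain ⟨c, rfl⟩ := Multiplicative.ofAdd.surjective c
  induction c using Pi.single_induction with
  | zero => simpa only [ofAdd_zero, map_one] using one_mem _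
  | add c d hc hd => simpa only [ofAdd_add, map_mul] using mul_mem hc hd
  | single i k =>
    rw [← mul_one k, ← smul_eq_mul, Pi.single_smul', ofAdd_zsmul, map_zpow]
    exact zpow_mem (Subgroup.subset_closure (Set.mem_range_self i)) k

end Palindromic

theorem closure_of_elementary_palindromic_is_free_abelian_general (m : ℕ)
    (P : Fin m → MulAut (FreeGroup (Fin (m + 1))))
    (hP : ∀ i : Fin m,
      P i (FreeGroup.of (Fin.castSucc i)) =
        FreeGroup.of (Fin.last m) * FreeGroup.of (Fin.castSucc i) * FreeGroup.of (Fin.last m))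
    (hP' : ∀ (i : Fin m) (k : Fin (m + 1)), k ≠ Fin.castSucc i →
      P i (FreeGroup.of k) = FreeGroup.of k) :
    Nonempty ((Subgroup.closure (Set.range P)) ≃* Multiplicative (Fin m → ℤ)) := by
  have hP_eq : P = fun i => Palindromic.toAut (.ofAdd (Pi.single i 1)) :=
    funext fun i => Palindromic.eq_toAut_single_one i (hP i) (hP' i)
  rw [hP_eq, ← Palindromic.range_toAut_eq_closure]
  exact ⟨(MonoidHom.ofInjective Palindromic.toAut_injective).symm⟩

/-- The subgroup of `Aut(F_n)` (here `n = m + 1` with `m ≥ 1`, so `n ≥ 2`)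
generated by the `n - 1 = m` elementary palindromic automorphisms `(a_i||a_n)`,
`i = 1, …, n-1`, is free abelian of rank `n - 1 = m`. -/
theorem closure_of_elementary_palindromic_is_free_abelian (m : ℕ) (hm : 1 ≤ m)
    (P : Fin m → MulAut (FreeGroup (Fin (m + 1))))
    (hP : ∀ i : Fin m,
      P i (FreeGroup.of (Fin.castSucc i)) =
        FreeGroup.of (Fin.last m) * FreeGroup.of (Fin.castSucc i) * FreeGroup.of (Fin.last m))
    (hP' : ∀ (i : Fin m) (k : Fin (m + 1)), k ≠ Fin.castSucc i →
      P i (FreeGroup.of k) = FreeGroup.of k) :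
    Nonempty ((Subgroup.closure (Set.range P)) ≃* Multiplicative (Fin m → ℤ)) :=
  closure_of_elementary_palindromic_is_free_abelian_general m P hP hP'
end

section
/- The symmetric automorphism group ΣA(F_n) has no element of order 2 in its center for n ≥ 2; consequently ΠA(F_n) and ΣA(F_n) are not isomorphic as subgroups of Aut(F_n) via any isomorphism identifying their centers, since σ_n is a central element of order 2 in ΠA(F_n). -/
/-- The symmetric automorphism group `ΣA(F_n)`: automorphisms sending each generator to a
conjugate of a generator or of an inverse of a generator. -/
def SigmaA (n : ℕ) : Set (MulAut (FreeGroup (Fin n))) :=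
  {α | ∀ i : Fin n, ∃ (j : Fin n) (g : FreeGroup (Fin n)),
    α (FreeGroup.of i) = g * FreeGroup.of j * g⁻¹ ∨
    α (FreeGroup.of i) = g * (FreeGroup.of j)⁻¹ * g⁻¹}

namespace SigmaAAux

open FreeGroup

variable {α : Type*} [DecidableEq α]

/-- No cancellation when consing a letter onto a reduced word. -/
lemma reduce_cons_eq (x : α × Bool) (L : List (α × Bool)) (hL : reduce L = L)
    (h : ∀ p ∈ L.head?, ¬(x.1 = p.1 ∧ x.2 = !p.2)) :
    reduce (x :: L) = x :: L := by
  rw [reduce.cons, hL]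
  cases L with
  | nil => rfl
  | cons hd tl =>
    have := h hd (by simp)
    simp only [if_neg this]

lemma invRev_append_singleton (x : α × Bool) (L : List (α × Bool)) :
    invRev (L ++ [x]) = (x.1, !x.2) :: invRev L := by
  simp [invRev]

/-- No cancellation when appending a letter onto a reduced word. -/
lemma reduce_append_eq (x : α × Bool) (L : List (α × Bool)) (hL : reduce L = L)
    (h : ∀ p ∈ L.getLast?, ¬(p.1 = x.1 ∧ p.2 = !x.2)) :
    reduce (L ++ [x]) = L ++ [x] := by
  have hinv : reduce (invRev L) = invRev L := by
    rw [reduce_invRev, hL]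
  have key : reduce (invRev (L ++ [x])) = invRev (L ++ [x]) := by
    rw [invRev_append_singleton]
    refine reduce_cons_eq _ _ hinv ?_
    intro p hp hcon
    have hhead : (invRev L).head? = L.getLast?.map (fun g : α × Bool => (g.1, !g.2)) := by
      rw [invRev, List.head?_reverse, List.getLast?_map]
    rw [hhead] at hp
    cases hq : L.getLast? with
    | none => rw [hq] at hp; simp at hp
    | some q =>
      rw [hq] at hp
      simp only [Option.map_some, Option.mem_def, Option.some.injEq] at hp
      subst hp
      obtain ⟨h1, h2⟩ := hcon
      simp only [Bool.not_not] at h1 h2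
      exact h q (by rw [hq]; rfl) ⟨h1.symm, h2.symm⟩
  have := reduce_invRev (w := L ++ [x])
  rw [key] at this
  exact invRev_injective this.symm

/-- An element of the free group of rank at least 2 commuting with every generator is trivial. -/
lemma eq_one_of_comm_of {n : ℕ} (hn : 2 ≤ n) (c : FreeGroup (Fin n))
    (h : ∀ k : Fin n, FreeGroup.of k * c = c * FreeGroup.of k) : c = 1 := by
  by_contra hc
  have hL : c.toWord ≠ [] := fun h0 => hc (toWord_eq_nil_iff.mp h0)
  have hred : reduce c.toWord = c.toWord := reduce_toWord c
  -- key: a letter that cancels neither in front nor in back must be the head of the word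
  have key : ∀ x : Fin n × Bool,
      (∀ p ∈ c.toWord.head?, ¬(x.1 = p.1 ∧ x.2 = !p.2)) →
      (∀ p ∈ c.toWord.getLast?, ¬(p.1 = x.1 ∧ p.2 = !x.2)) →
      c.toWord.head? = some x := by
    intro x hf hb
    have hcom : mk [x] * c = c * mk [x] := by
      rcases x with ⟨k, b⟩
      have hinv : (FreeGroup.of k)⁻¹ = mk [(k, false)] := by
        show (mk [(k, true)])⁻¹ = _
        rw [inv_mk]
        simp [invRev]
      cases b
      · rw [← hinv]
        have := h k
        calc (FreeGroup.of k)⁻¹ * c = (FreeGroup.of k)⁻¹ * (c * FreeGroup.of k) * (FreeGroup.of k)⁻¹ := by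
              group
          _ = (FreeGroup.of k)⁻¹ * (FreeGroup.of k * c) * (FreeGroup.of k)⁻¹ := by rw [this]
          _ = c * (FreeGroup.of k)⁻¹ := by group
      · exact h k
    have h1 : (mk [x] * c).toWord = x :: c.toWord := by
      conv_lhs => rw [← mk_toWord (x := c)]
      rw [mul_mk, toWord_mk, List.singleton_append]
      exact reduce_cons_eq x c.toWord hred hf
    have h2 : (c * mk [x]).toWord = c.toWord ++ [x] := by
      conv_lhs => rw [← mk_toWord (x := c)]
      rw [mul_mk, toWord_mk]
      exact reduce_append_eq x c.toWord hred hb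
    have h3 : x :: c.toWord = c.toWord ++ [x] := by
      rw [← h1, ← h2, hcom]
    have := congrArg List.head? h3
    simp only [List.head?_cons, List.head?_append_of_ne_nil _ hL] at this
    exact this.symm
  -- now analyze head and last letters
  obtain ⟨hd, hhd⟩ : ∃ hd, c.toWord.head? = some hd := by
    cases hw : c.toWord with
    | nil => exact absurd hw hL
    | cons a l => exact ⟨a, by simp⟩
  obtain ⟨lst, hlst⟩ : ∃ lst, c.toWord.getLast? = some lst := by
    cases hw : c.toWord.getLast? with
    | none => exact absurd (List.getLast?_eq_none_iff.mp hw) hL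
    | some a => exact ⟨a, rfl⟩
  have h0 : (0 : ℕ) < n := by omega
  have h1n : (1 : ℕ) < n := by omega
  by_cases hij : hd.1 = lst.1
  · -- pick an index different from hd.1
    obtain ⟨k, hk⟩ : ∃ k : Fin n, k ≠ hd.1 := by
      by_cases hcase : hd.1 = ⟨0, h0⟩
      · exact ⟨⟨1, h1n⟩, by simp [hcase, Fin.ext_iff]⟩
      · exact ⟨⟨0, h0⟩, fun he => hcase he.symm⟩
    have := key (k, true) ?_ ?_
    · rw [hhd] at this
      simp only [Option.some.injEq] at this
      exact hk (by rw [this])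
    · intro p hp
      rw [hhd] at hp
      simp only [Option.mem_def, Option.some.injEq] at hp
      subst hp
      rintro ⟨h1, -⟩
      exact hk h1
    · intro p hp
      rw [hlst] at hp
      simp only [Option.mem_def, Option.some.injEq] at hp
      subst hp
      rintro ⟨h1, -⟩
      exact hk ((hij.trans h1).symm)
  · -- use the last letter itself
    have := key lst ?_ ?_
    · rw [hhd] at this
      simp only [Option.some.injEq] at this
      exact hij (by rw [this])
    · intro p hp
      rw [hhd] at hp
      simp only [Option.mem_def, Option.some.injEq] at hp
      subst hp
      rintro ⟨h1, -⟩
      exact hij h1.symm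
    · intro p hp
      rw [hlst] at hp
      simp only [Option.mem_def, Option.some.injEq] at hp
      subst hp
      rintro ⟨-, h2⟩
      simp at h2

/-- Extensionality for automorphisms of the free group. -/
lemma mulaut_ext {n : ℕ} {f g : MulAut (FreeGroup (Fin n))}
    (h : ∀ i, f (FreeGroup.of i) = g (FreeGroup.of i)) : f = g := by
  have : (f : FreeGroup (Fin n) →* FreeGroup (Fin n)) = (g : FreeGroup (Fin n) →* FreeGroup (Fin n)) :=
    FreeGroup.ext_hom _ _ h
  exact MulEquiv.ext fun x => DFunLike.congr_fun this x

lemma sigma_mk {n : ℕ} (σ : MulAut (FreeGroup (Fin n)))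
    (hσ : ∀ i : Fin n, σ (FreeGroup.of i) = (FreeGroup.of i)⁻¹) :
    ∀ L : List (Fin n × Bool), σ (mk L) = mk (L.map fun p => (p.1, !p.2))
  | [] => by
    simp only [List.map_nil]
    rw [← one_eq_mk]
    exact _root_.map_one σ
  | p :: L => by
    have hsplit : (mk (p :: L) : FreeGroup (Fin n)) = mk [p] * mk L := by
      rw [mul_mk, List.singleton_append]
    have hsplit2 : (mk ((p.1, !p.2) :: L.map fun q => (q.1, !q.2)) : FreeGroup (Fin n)) =
        mk [(p.1, !p.2)] * mk (L.map fun q => (q.1, !q.2)) := by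
      rw [mul_mk, List.singleton_append]
    have hone : σ (mk [p]) = mk [(p.1, !p.2)] := by
      rcases p with ⟨i, b⟩
      have hinv : (FreeGroup.of i)⁻¹ = mk [(i, false)] := by
        show (mk [(i, true)])⁻¹ = _
        rw [inv_mk]; simp [invRev]
      cases b
      · show σ (mk [(i, false)]) = mk [(i, true)]
        rw [← hinv, _root_.map_inv, hσ i, inv_inv]; rfl
      · show σ (mk [(i, true)]) = mk [(i, false)]
        rw [← hinv, ← hσ i]; rfl
    rw [hsplit, _root_.map_mul, hone, sigma_mk σ hσ L, List.map_cons, hsplit2]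

lemma sigma_palindrome {n : ℕ} (σ : MulAut (FreeGroup (Fin n)))
    (hσ : ∀ i : Fin n, σ (FreeGroup.of i) = (FreeGroup.of i)⁻¹)
    (w : FreeGroup (Fin n)) (hw : w.toWord.reverse = w.toWord) : σ w = w⁻¹ := by
  conv_lhs => rw [← mk_toWord (x := w)]
  rw [sigma_mk σ hσ]
  conv_rhs => rw [← mk_toWord (x := w)]
  rw [inv_mk, invRev]
  congr 1
  rw [← List.map_reverse, hw]

end SigmaAAux

/-- For `n ≥ 2`, `ΣA(F_n)` has no element of order 2 in its center, while
`σ_n` is a central element of order 2 of the palindromic automorphism group `ΠA(F_n)`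
(so no isomorphism identifying centers can exist). -/
theorem sigmaA_center_no_order_two (n : ℕ) (hn : 2 ≤ n)
    (σ : MulAut (FreeGroup (Fin n)))
    (hσ : ∀ i : Fin n, σ (FreeGroup.of i) = (FreeGroup.of i)⁻¹) :
    (∀ α ∈ SigmaA n, (∀ β ∈ SigmaA n, α * β = β * α) → α * α = 1 → α = 1) ∧
    σ * σ = 1 ∧ σ ≠ 1 ∧
    (∀ β : MulAut (FreeGroup (Fin n)),
      (∀ i : Fin n, IsPalindrome (β (FreeGroup.of i))) → σ * β = β * σ) := by
  have hn' : 0 < n := by omega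
  refine ⟨?_, ?_, ?_, ?_⟩
  · -- central elements of ΣA are trivial
    intro α _ hcen _
    have hconj : ∀ g : FreeGroup (Fin n), MulAut.conj g ∈ SigmaA n := by
      intro g i
      exact ⟨i, g, Or.inl (by rw [MulAut.conj_apply])⟩
    have hfix : ∀ i : Fin n, α (FreeGroup.of i) = FreeGroup.of i := by
      intro i
      set g := FreeGroup.of i with hg
      have hc := hcen (MulAut.conj g) (hconj g)
      have hy : ∀ y : FreeGroup (Fin n), (g⁻¹ * α g) * y = y * (g⁻¹ * α g) := by
        intro y
        obtain ⟨x, rfl⟩ := α.surjective y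
        have h1 := DFunLike.congr_fun hc x
        simp only [MulAut.mul_apply, MulAut.conj_apply, map_mul, map_inv] at h1
        calc (g⁻¹ * α g) * α x = g⁻¹ * (α g * α x * (α g)⁻¹) * α g := by group
          _ = g⁻¹ * (g * α x * g⁻¹) * α g := by rw [h1]
          _ = α x * (g⁻¹ * α g) := by group
      have hcomm : ∀ k : Fin n, FreeGroup.of k * (g⁻¹ * α g) = (g⁻¹ * α g) * FreeGroup.of k :=
        fun k => (hy (FreeGroup.of k)).symm
      have := SigmaAAux.eq_one_of_comm_of hn (g⁻¹ * α g) hcomm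
      have : α g = g := by
        have h2 : g * (g⁻¹ * α g) = g * 1 := by rw [this]
        simpa [mul_assoc] using h2
      exact this
    exact SigmaAAux.mulaut_ext fun i => by rw [hfix i, MulAut.one_apply]
  · -- σ² = 1
    refine SigmaAAux.mulaut_ext fun i => ?_
    rw [MulAut.mul_apply, hσ i, map_inv, hσ i, inv_inv, MulAut.one_apply]
  · -- σ ≠ 1
    intro h
    have h0 := hσ ⟨0, hn'⟩
    rw [h, MulAut.one_apply] at h0
    have := congrArg FreeGroup.toWord h0
    rw [FreeGroup.toWord_inv, FreeGroup.toWord_of] at this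
    simp [FreeGroup.invRev] at this
  · -- σ commutes with palindromic automorphisms
    intro β hβ
    refine SigmaAAux.mulaut_ext fun i => ?_
    rw [MulAut.mul_apply, MulAut.mul_apply, hσ i, map_inv,
      SigmaAAux.sigma_palindrome σ hσ (β (FreeGroup.of i)) (hβ i)]
end

section
/- Let φ be an automorphism of a finite rooted tree T fixing the root, and suppose every non-leaf vertex has valence 3 with the root of valence 1. If E_k denotes the set of edges at distance at most k from the root, then φ^{2^k} fixes every edge in E_k. -/
/-- A map that injectively maps a finset of size ≤ 2 to itself squares to the identity on it. -/
lemma sq_fix_of_card_le_two {V : Type} [DecidableEq V] (S : Finset V) (hS : S.card ≤ 2)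
    (f : V → V) (hinj : Function.Injective f) (hmaps : ∀ x ∈ S, f x ∈ S) :
    ∀ x ∈ S, f (f x) = x := by
  intro x hx
  by_cases hfx : f x = x
  · rw [hfx, hfx]
  · have hfxS : f x ∈ S := hmaps x hx
    have hsub : ({x, f x} : Finset V) ⊆ S := by
      intro y hy
      simp only [Finset.mem_insert, Finset.mem_singleton] at hy
      rcases hy with rfl | rfl <;> assumption
    have hcard : ({x, f x} : Finset V).card = 2 := by
      rw [Finset.card_insert_of_notMem (by simpa using fun h => hfx h.symm)]
      simp
    have hSeq : S = {x, f x} :=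
      (Finset.eq_of_subset_of_card_le hsub (by omega)).symm
    have hffx : f (f x) ∈ S := hmaps _ hfxS
    rw [hSeq] at hffx
    simp only [Finset.mem_insert, Finset.mem_singleton] at hffx
    rcases hffx with h | h
    · exact h
    · exact absurd (hinj h) hfx

/-- Let `e` be a root-preserving automorphism of a finite rooted tree in
which the root has valence 1 and every other vertex has valence 1 or 3. If `E_k` is the
set of edges at distance at most `k` from the root, then `e ^ (2 ^ k)` fixes every edge
of `E_k` (pointwise). -/
theorem power_fixes_edges_near_root (V : Type) [Fintype V] [DecidableEq V]
    (G : SimpleGraph V) [DecidableRel G.Adj] (root : V)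
    (htree : G.IsTree) (hroot : G.degree root = 1)
    (hval : ∀ v : V, G.degree v = 1 ∨ G.degree v = 3)
    (e : Equiv.Perm V) (he : ∀ u v : V, G.Adj (e u) (e v) ↔ G.Adj u v)
    (hroot' : e root = root) (k : ℕ) :
    ∀ u v : V, G.Adj u v → (G.dist root u ≤ k ∨ G.dist root v ≤ k) →
      (e ^ (2 ^ k)) u = u ∧ (e ^ (2 ^ k)) v = v := by
  have hconn : G.Connected := htree.isConnected
  -- powers preserve adjacency
  have hepow : ∀ n : ℕ, ∀ u v : V, G.Adj ((e ^ n) u) ((e ^ n) v) ↔ G.Adj u v := by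
    intro n
    induction n with
    | zero => simp
    | succ n ih =>
      intro u v
      have : ∀ w : V, (e ^ (n + 1)) w = (e ^ n) (e w) := by
        intro w; rw [pow_succ]; rfl
      rw [this u, this v, ih, he]
  have hepowroot : ∀ n : ℕ, (e ^ n) root = root := by
    intro n
    induction n with
    | zero => rfl
    | succ n ih => rw [pow_succ]; simp [Equiv.Perm.mul_apply, hroot', ih]
  -- general step: if f is an adjacency-preserving perm fixing u and all vertices
  -- strictly closer to root (in particular the parent of u), then f² fixes each neighbor of u
  have hstep : ∀ (n : ℕ) (u v : V), G.Adj u v → (e ^ n) u = u →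
      (∀ w : V, G.Adj w u → G.dist root w < G.dist root u → (e ^ n) w = w) →
      (e ^ n) ((e ^ n) v) = v := by
    intro n u v huv hu hpar
    set f : V → V := fun x => (e ^ n) x with hf
    have hinj : Function.Injective f := (e ^ n).injective
    by_cases hur : u = root
    · -- root has a unique neighbor
      have hmem : v ∈ G.neighborFinset u := by simpa using huv
      have hmemf : f v ∈ G.neighborFinset u := by
        simp only [SimpleGraph.mem_neighborFinset]
        have := (hepow n u v).mpr huv
        rwa [hu] at this
      have hcardeq : (G.neighborFinset u).card = 1 := by
        rw [SimpleGraph.card_neighborFinset_eq_degree, hur, hroot]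
      obtain ⟨a, ha⟩ := Finset.card_eq_one.mp hcardeq
      rw [ha, Finset.mem_singleton] at hmem hmemf
      show f (f v) = v
      subst hmem
      rw [hmemf, hmemf]
    · -- u ≠ root: find parent p of u
      have hdu : G.dist root u ≠ 0 := by
        simp [hconn.dist_eq_zero_iff, Ne.symm hur]
      obtain ⟨p, hWp⟩ := hconn.exists_walk_length_eq_dist root u
      -- take last vertex before u on a geodesic
      obtain ⟨q, hqu, hqd⟩ : ∃ q : V, G.Adj q u ∧ G.dist root q < G.dist root u := by
        cases hrev : p.reverse with
        | nil =>
          exfalso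
          have := congrArg SimpleGraph.Walk.length hrev
          rw [SimpleGraph.Walk.length_reverse] at this
          simp only [SimpleGraph.Walk.length_nil] at this
          omega
        | cons h q' =>
          refine ⟨_, h.symm, ?_⟩
          have hlen : q'.length + 1 = G.dist root u := by
            have := congrArg SimpleGraph.Walk.length hrev
            rw [SimpleGraph.Walk.length_reverse, SimpleGraph.Walk.length_cons] at this
            omega
          have := SimpleGraph.dist_le q'.reverse
          rw [SimpleGraph.Walk.length_reverse] at this
          omega
      have hfq : f q = q := hpar q hqu hqd
      -- f preserves the neighbor set of u
      have hmaps : ∀ x ∈ G.neighborFinset u \ {q}, f x ∈ G.neighborFinset u \ {q} := by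
        intro x hxm
        rw [Finset.mem_sdiff, SimpleGraph.mem_neighborFinset, Finset.mem_singleton] at hxm ⊢
        obtain ⟨hadj, hxq⟩ := hxm
        constructor
        · have := (hepow n u x).mpr hadj
          rwa [hu] at this
        · intro hcon
          exact hxq (hinj (by rw [hcon, hfq]))
      have hcard : (G.neighborFinset u \ {q}).card ≤ 2 := by
        have h1 : (G.neighborFinset u).card ≤ 3 := by
          rw [SimpleGraph.card_neighborFinset_eq_degree]
          rcases hval u with h | h <;> omega
        have h2 : q ∈ G.neighborFinset u := by simpa using hqu.symm
        rw [Finset.card_sdiff_of_subset (by simpa using h2), Finset.card_singleton]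
        omega
      by_cases hvq : v = q
      · subst hvq
        show f (f v) = v
        rw [hfq, hfq]
      · exact sq_fix_of_card_le_two _ hcard f hinj hmaps v
          (by rw [Finset.mem_sdiff, SimpleGraph.mem_neighborFinset, Finset.mem_singleton]
              exact ⟨huv, hvq⟩)
  -- main induction
  have main : ∀ k : ℕ, ∀ u v : V, G.Adj u v → G.dist root u ≤ k →
      (e ^ 2 ^ k) u = u ∧ (e ^ 2 ^ k) v = v := by
    intro k
    induction k with
    | zero =>
      intro u v huv hd
      have hu : u = root := by
        have h0 : G.dist root u = 0 := Nat.le_zero.mp hd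
        exact (hconn.dist_eq_zero_iff.mp h0).symm
      have hu' : (e ^ 2 ^ 0) u = u := by rw [hu]; exact hepowroot _
      refine ⟨hu', ?_⟩
      have hmem : v ∈ G.neighborFinset u := by simpa using huv
      have hmemf : (e ^ 2 ^ 0) v ∈ G.neighborFinset u := by
        simp only [SimpleGraph.mem_neighborFinset]
        have := (hepow (2 ^ 0) u v).mpr huv
        rwa [hu'] at this
      have hcardeq : (G.neighborFinset u).card = 1 := by
        rw [SimpleGraph.card_neighborFinset_eq_degree, hu, hroot]
      obtain ⟨a, ha⟩ := Finset.card_eq_one.mp hcardeq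
      rw [ha, Finset.mem_singleton] at hmem hmemf
      rw [hmemf, hmem]
    | succ k ih =>
      intro u v huv hd
      -- e^(2^k) fixes every vertex at distance ≤ k+1
      have hfix : ∀ w : V, G.dist root w ≤ k + 1 → (e ^ 2 ^ k) w = w := by
        intro w hw
        by_cases hwr : w = root
        · subst hwr; exact hepowroot _
        · have hdw : G.dist root w ≠ 0 := by
            simp [hconn.dist_eq_zero_iff, Ne.symm hwr]
          obtain ⟨p, hWp⟩ := hconn.exists_walk_length_eq_dist root w
          obtain ⟨q, hqw, hqd⟩ : ∃ q : V, G.Adj q w ∧ G.dist root q < G.dist root w := by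
            cases hrev : p.reverse with
            | nil =>
              exfalso
              have := congrArg SimpleGraph.Walk.length hrev
              rw [SimpleGraph.Walk.length_reverse] at this
              simp only [SimpleGraph.Walk.length_nil] at this
              omega
            | cons h q' =>
              refine ⟨_, h.symm, ?_⟩
              have hlen : q'.length + 1 = G.dist root w := by
                have := congrArg SimpleGraph.Walk.length hrev
                rw [SimpleGraph.Walk.length_reverse, SimpleGraph.Walk.length_cons] at this
                omega
              have := SimpleGraph.dist_le q'.reverse
              rw [SimpleGraph.Walk.length_reverse] at this
              omega
          exact (ih q w hqw (by omega)).2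
      have hpow : e ^ 2 ^ (k + 1) = (e ^ 2 ^ k) * (e ^ 2 ^ k) := by
        rw [← pow_add]
        congr 1
        omega
      have happ : ∀ x : V, (e ^ 2 ^ (k + 1)) x = (e ^ 2 ^ k) ((e ^ 2 ^ k) x) := by
        intro x; rw [hpow]; rfl
      have hu : (e ^ 2 ^ k) u = u := hfix u hd
      have hu2 : (e ^ 2 ^ (k + 1)) u = u := by rw [happ, hu, hu]
      refine ⟨hu2, ?_⟩
      rw [happ]
      exact hstep (2 ^ k) u v huv hu
        (fun w hw hd' => hfix w (by omega))
  intro u v huv hd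
  rcases hd with hd | hd
  · exact main k u v huv hd
  · have := main k v u huv.symm hd
    exact ⟨this.2, this.1⟩
end

section
/- The abelianization of the elementary palindromic automorphism group EΠA(F_n), presented with generators (a_i||a_j) for i ≠ j and relations (1) (a_i||a_k)(a_j||a_k)=(a_j||a_k)(a_i||a_k), (2) (a_i||a_k)(a_j||a_l)=(a_j||a_l)(a_i||a_k), (3) (a_i||a_k)(a_j||a_k)(a_i||a_j)=(a_i||a_j)(a_j||a_k)(a_i||a_k)^{-1}, is an elementary abelian 2-group of rank n(n−1). -/
/-- The index set of generators `(a_i||a_j)`, `i ≠ j`, of `EΠA(F_n)`. -/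
def PalIdx (n : ℕ) : Type := {p : Fin n × Fin n // p.1 ≠ p.2}

/-- The generator `(a_i||a_j)` of the free group on `PalIdx n`. -/
def palGen {n : ℕ} {i j : Fin n} (h : i ≠ j) : FreeGroup (PalIdx n) :=
  FreeGroup.of ⟨(i, j), h⟩

/-- Collins' defining relators for `EΠA(F_n)`: with `A = (a_i||a_k)`, `B = (a_j||a_k)`,
`C = (a_i||a_j)` and `i, j, k, l` pairwise distinct,
(1) `A B A⁻¹ B⁻¹`, (2) `(a_i||a_k)(a_j||a_l)(a_i||a_k)⁻¹(a_j||a_l)⁻¹`,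
(3) `A B C (C B A⁻¹)⁻¹ = A B C A B⁻¹ C⁻¹`. -/
def palRels (n : ℕ) : Set (FreeGroup (PalIdx n)) :=
  { w | (∃ (i j k : Fin n) (hik : i ≠ k) (hjk : j ≠ k), i ≠ j ∧
          w = palGen hik * palGen hjk * (palGen hik)⁻¹ * (palGen hjk)⁻¹)
      ∨ (∃ (i j k l : Fin n) (hik : i ≠ k) (hjl : j ≠ l),
          i ≠ j ∧ i ≠ l ∧ j ≠ k ∧ k ≠ l ∧
          w = palGen hik * palGen hjl * (palGen hik)⁻¹ * (palGen hjl)⁻¹)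
      ∨ (∃ (i j k : Fin n) (hik : i ≠ k) (hjk : j ≠ k) (hij : i ≠ j),
          w = palGen hik * palGen hjk * palGen hij *
              palGen hik * (palGen hjk)⁻¹ * (palGen hij)⁻¹) }

/-! Relators (1) and (2) are commutators, and in a commutative group relator (3) reduces to
`(a_i||a_k)²`. As `n ≥ 3`, every generator occurs as such an `(a_i||a_k)`, so the abelianization
is the abelian group on the `n (n - 1)` generators subject only to `x² = 1`: an `𝔽₂`-vector space
spanned by the generators, which are linearly independent because the homomorphism sending each
generator to a standard basis vector of `𝔽₂^{n (n - 1)}` respects the relators. -/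

section ElementaryAbelian

variable {G ι : Type*} [CommGroup G]

theorem pow_two_eq_one_of_closure_range_eq_top (g : ι → G)
    (hg : Subgroup.closure (Set.range g) = ⊤) (hsq : ∀ i, g i ^ 2 = 1) (x : G) : x ^ 2 = 1 := by
  have hx : x ∈ Subgroup.closure (Set.range g) := hg ▸ Subgroup.mem_top x
  induction hx using Subgroup.closure_induction with
  | mem _ h => obtain ⟨i, rfl⟩ := h; exact hsq i
  | one => exact one_pow 2
  | mul _ _ _ _ ha hb => rw [mul_pow, ha, hb, one_mul]
  | inv _ _ ha => rw [inv_pow, ha, inv_one]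

/-- `Additive G` is an `𝔽₂`-vector space spanned by `g`, and `φ` shows `g` is linearly
independent, so `g` is a basis. -/
theorem nonempty_mulEquiv_of_map_eq_single [Finite ι] [DecidableEq ι] (g : ι → G)
    (hg : Subgroup.closure (Set.range g) = ⊤) (hsq : ∀ i, g i ^ 2 = 1)
    (φ : G →* Multiplicative (ι → ZMod 2))
    (hφ : ∀ i, φ (g i) = Multiplicative.ofAdd (Pi.single i 1)) :
    Nonempty (G ≃* Multiplicative (Fin (Nat.card ι) → ZMod 2)) := by
  let _ : Module (ZMod 2) (Additive G) :=
    AddCommGroup.zmodModule fun x => pow_two_eq_one_of_closure_range_eq_top g hg hsq x.toMul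
  let v : ι → Additive G := fun i => Additive.ofMul (g i)
  have hli : LinearIndependent (ZMod 2) v := by
    let f := (MonoidHom.toAdditiveLeft φ).toZModLinearMap 2
    have hfv : f ∘ v = Pi.basisFun (ZMod 2) ι := funext fun i => by simp [f, v, hφ]
    exact .of_comp f (hfv ▸ (Pi.basisFun (ZMod 2) ι).linearIndependent)
  have hsp : ⊤ ≤ Submodule.span (ZMod 2) (Set.range v) := by
    rintro x -
    have hx : x.toMul ∈ Subgroup.closure (Set.range g) := hg ▸ Subgroup.mem_top _
    refine Subgroup.closure_induction
      (p := fun y _ => Additive.ofMul y ∈ Submodule.span (ZMod 2) (Set.range v))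
      ?_ (zero_mem _) (fun _ _ _ _ => add_mem) (fun _ _ => neg_mem) hx
    rintro _ ⟨i, rfl⟩
    exact Submodule.subset_span ⟨i, rfl⟩
  let b := (Module.Basis.mk hli hsp).reindex (Finite.equivFin ι)
  exact ⟨AddEquiv.toMultiplicativeRight b.equivFun.toAddEquiv⟩

end ElementaryAbelian

theorem Abelianization.closure_range_of_comp {α G : Type*} [Group G] (f : α → G)
    (hf : Subgroup.closure (Set.range f) = ⊤) :
    Subgroup.closure (Set.range (Abelianization.of ∘ f)) = ⊤ := by
  rw [Set.range_comp, ← MonoidHom.map_closure, hf, ← MonoidHom.range_eq_map,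
    MonoidHom.range_eq_top]
  exact QuotientGroup.mk'_surjective _

theorem PresentedGroup.lift_comp_of_eq_one {α G : Type*} [Group G] {rels : Set (FreeGroup α)}
    (φ : PresentedGroup rels →* G) {r : FreeGroup α} (hr : r ∈ rels) :
    FreeGroup.lift (φ ∘ PresentedGroup.of) r = 1 := by
  rw [← FreeGroup.lift_unique (f := φ ∘ PresentedGroup.of) (φ.comp (PresentedGroup.mk rels))
    fun _ => rfl, MonoidHom.comp_apply, PresentedGroup.one_of_mem hr, map_one]

theorem Multiplicative.pi_zmodTwo_pow_two {ι : Type*} (x : Multiplicative (ι → ZMod 2)) :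
    x ^ 2 = 1 :=
  funext fun _ => CharTwo.two_nsmul _

instance (n : ℕ) : Fintype (PalIdx n) :=
  inferInstanceAs (Fintype {p : Fin n × Fin n // p.1 ≠ p.2})

instance (n : ℕ) : DecidableEq (PalIdx n) :=
  inferInstanceAs (DecidableEq {p : Fin n × Fin n // p.1 ≠ p.2})

theorem Nat.card_palIdx (n : ℕ) : Nat.card (PalIdx n) = n * (n - 1) := by
  have h : ({p | p.1 ≠ p.2} : Finset (Fin n × Fin n)) = Finset.univ.offDiag := by
    ext; simp [Finset.mem_offDiag]
  rw [Nat.card_eq_fintype_card]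
  show Fintype.card {p : Fin n × Fin n // p.1 ≠ p.2} = _
  rw [Fintype.card_subtype, h, Finset.offDiag_card, Finset.card_univ, Fintype.card_fin,
    Nat.mul_sub_one]

@[simp]
theorem FreeGroup.lift_palGen {H : Type*} [Group H] {n : ℕ} (f : PalIdx n → H) {i j : Fin n}
    (h : i ≠ j) : FreeGroup.lift f (palGen h) = f ⟨(i, j), h⟩ :=
  FreeGroup.lift_apply_of

theorem lift_palRels_eq_one_iff {H : Type*} [CommGroup H] {n : ℕ} (hn : 3 ≤ n)
    (f : PalIdx n → H) : (∀ r ∈ palRels n, FreeGroup.lift f r = 1) ↔ ∀ p, f p ^ 2 = 1 := by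
  have relator_three (a b c : H) : a * b * c * a * b⁻¹ * c⁻¹ = a ^ 2 := by
    rw [sq]; simp [mul_comm, mul_left_comm, mul_assoc]
  constructor
  · rintro hf ⟨⟨i, k⟩, hik⟩
    obtain ⟨j, hji, hjk⟩ := Fin.exists_ne_and_ne_of_two_lt i k hn
    simpa only [map_mul, map_inv, FreeGroup.lift_palGen, relator_three] using
      hf _ (Or.inr (Or.inr ⟨i, j, k, hik, hjk, hji.symm, rfl⟩))
  · rintro hf r (⟨i, j, k, hik, hjk, -, rfl⟩ | ⟨i, j, k, l, hik, hjl, -, -, -, -, rfl⟩ |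
      ⟨i, j, k, hik, hjk, hij, rfl⟩)
    · simp
    · simp
    · simpa only [map_mul, map_inv, FreeGroup.lift_palGen, relator_three] using hf _

/-- The abelianization of the elementary palindromic automorphism group
`EΠA(F_n)`, given by Collins' presentation, is an elementary abelian 2-group of rank
`n (n - 1)`. -/
theorem abelianization_EPiA (n : ℕ) (hn : 3 ≤ n) :
    Nonempty (Abelianization (PresentedGroup (palRels n)) ≃*
      Multiplicative (Fin (n * (n - 1)) → ZMod 2)) := by
  let g (p : PalIdx n) : Abelianization (PresentedGroup (palRels n)) := .of (.of p)
  let e (p : PalIdx n) : Multiplicative (PalIdx n → ZMod 2) := .ofAdd (Pi.single p 1)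
  have hg : Subgroup.closure (Set.range g) = ⊤ :=
    Abelianization.closure_range_of_comp _ (PresentedGroup.closure_range_of _)
  have hsq : ∀ p, g p ^ 2 = 1 := (lift_palRels_eq_one_iff hn g).1 fun _ =>
    PresentedGroup.lift_comp_of_eq_one Abelianization.of
  let φ := Abelianization.lift <| PresentedGroup.toGroup <|
    (lift_palRels_eq_one_iff hn e).2 fun _ => Multiplicative.pi_zmodTwo_pow_two _
  rw [← Nat.card_palIdx]
  exact nonempty_mulEquiv_of_map_eq_single g hg hsq φ fun p => by simp [φ, g, e]
end
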